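/- (Block decomposition for the cardinality-repair cost.) Let A and B be disjoint finite sets such that C(a,b) holds for every a ∈ A and every b ∈ B. Then for every E ⊆ A ∪ B: I_R(E) = min( I_R(E ∩ A) + |E ∩ B|, I_R(E ∩ B) + |E ∩ A| ). -/
import Mathlib


open scoped BigOperators Classical

variable {α : Type*} [DecidableEq α]

/-- A finite set `E` is consistent if it contains no two distinct conflicting elements. -/
def Consistent (C : α → α → Prop) (E : Finset α) : Prop :=
  ∀ g ∈ E, ∀ h ∈ E, g ≠ h → ¬ C g h

/-- The cost of a cardinality repair of `E`: the minimal number of elements whose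
removal from `E` leaves a consistent set. -/
noncomputable def IR (C : α → α → Prop) (E : Finset α) : ℕ :=
  E.card - ((E.powerset.filter (Consistent C)).sup Finset.card)

/-- Block decomposition for the cardinality-repair cost: if every element of `A`
conflicts with every element of `B` (with `A`, `B` disjoint), then for `E ⊆ A ∪ B`,
`I_R(E) = min(I_R(E ∩ A) + |E ∩ B|, I_R(E ∩ B) + |E ∩ A|)`. -/
theorem IR_block_decomposition (C : α → α → Prop) (hsymm : Symmetric C)
    (A B : Finset α) (hdisj : Disjoint A B)
    (hC : ∀ a ∈ A, ∀ b ∈ B, C a b) (E : Finset α) (hE : E ⊆ A ∪ B) :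
    IR C E = min (IR C (E ∩ A) + (E ∩ B).card) (IR C (E ∩ B) + (E ∩ A).card) := by
  classical
  set f : Finset α → ℕ := fun X => (X.powerset.filter (Consistent C)).sup Finset.card with hf
  have hcardE : E.card = (E ∩ A).card + (E ∩ B).card := by
    rw [← Finset.card_union_of_disjoint
      (hdisj.mono Finset.inter_subset_right Finset.inter_subset_right),
      ← Finset.inter_union_distrib_left, Finset.inter_eq_left.mpr hE]
  have hle : ∀ X : Finset α, f X ≤ X.card := by
    intro X
    apply Finset.sup_le
    intro S hS
    simp only [Finset.mem_filter, Finset.mem_powerset] at hS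
    exact Finset.card_le_card hS.1
  have hmono : ∀ X Y : Finset α, X ⊆ Y → f X ≤ f Y := by
    intro X Y hXY
    apply Finset.sup_le
    intro S hS
    simp only [Finset.mem_filter, Finset.mem_powerset] at hS
    exact Finset.le_sup (by
      simp only [Finset.mem_filter, Finset.mem_powerset]
      exact ⟨hS.1.trans hXY, hS.2⟩)
  have hsplit : f E ≤ max (f (E ∩ A)) (f (E ∩ B)) := by
    apply Finset.sup_le
    intro S hS
    simp only [Finset.mem_filter, Finset.mem_powerset] at hS
    rcases Classical.em (∃ a ∈ S, a ∈ A) with ⟨a, haS, haA⟩ | h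
    · refine le_max_of_le_left (Finset.le_sup ?_)
      simp only [Finset.mem_filter, Finset.mem_powerset]
      refine ⟨fun x hx => Finset.mem_inter.mpr ⟨hS.1 hx, ?_⟩, hS.2⟩
      by_contra hxA
      have hxB : x ∈ B := (Finset.mem_union.mp (hE (hS.1 hx))).resolve_left hxA
      have hne : a ≠ x := fun hax => hxA (hax ▸ haA)
      exact hS.2 a haS x hx hne (hC a haA x hxB)
    · refine le_max_of_le_right (Finset.le_sup ?_)
      simp only [Finset.mem_filter, Finset.mem_powerset]
      refine ⟨fun x hx => Finset.mem_inter.mpr ⟨hS.1 hx, ?_⟩, hS.2⟩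
      exact (Finset.mem_union.mp (hE (hS.1 hx))).resolve_left (fun hxA => h ⟨x, hx, hxA⟩)
  have hEq : f E = max (f (E ∩ A)) (f (E ∩ B)) :=
    le_antisymm hsplit (max_le (hmono _ _ Finset.inter_subset_left)
      (hmono _ _ Finset.inter_subset_left))
  have hfa := hle (E ∩ A)
  have hfb := hle (E ∩ B)
  show E.card - f E = min ((E ∩ A).card - f (E ∩ A) + (E ∩ B).card)
      ((E ∩ B).card - f (E ∩ B) + (E ∩ A).card)
  omega
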